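/- arXiv:2605.19724 — 2 statements merged into one kernel-verified Lean document; each statement's English description precedes it below -/
import Mathlib

section
/- Let G be a finite group such that every symmetric 2-cocycle on G with values in ℂˣ is a coboundary. Then the commutator subgroup of the enveloping group A(G) of the conjugacy quandle of G is isomorphic (as a group) to the commutator subgroup of G. -/
/-- A 2-cocycle on a group `G` with values in `ℂˣ` (trivial action). -/
def IsTwoCocycle {G : Type*} [Group G] (α : G → G → ℂˣ) : Prop :=
  ∀ g h k : G, α g h * α (g * h) k = α g (h * k) * α h k

/-- A 2-cocycle is symmetric if `α g h = α h g` for all `g h`. -/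
def IsSymmCocycle {G : Type*} [Group G] (α : G → G → ℂˣ) : Prop :=
  ∀ g h : G, α g h = α h g

/-- A 2-cocycle is a coboundary if `α g h = β g * β h * (β (g*h))⁻¹` for some `β`. -/
def IsCoboundary {G : Type*} [Group G] (α : G → G → ℂˣ) : Prop :=
  ∃ β : G → ℂˣ, ∀ g h : G, α g h = β g * β h * (β (g * h))⁻¹

/-- Relations `e_g e_h e_g⁻¹ = e_{g h g⁻¹}` defining the enveloping group of the
conjugacy quandle of `G`. -/
def conjQuandleRels (G : Type*) [Group G] : Set (FreeGroup G) :=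
  { r | ∃ g h : G, r = FreeGroup.of g * FreeGroup.of h * (FreeGroup.of g)⁻¹ *
      (FreeGroup.of (g * h * g⁻¹))⁻¹ }

/-- The enveloping group `A(G)` of the conjugacy quandle of `G`, as a presented group. -/
abbrev EnvelopingGroup (G : Type*) [Group G] : Type _ :=
  PresentedGroup (conjQuandleRels G)

/-!
Let `π : A(G) → G` send `e_g` to `g`. The defining relations give `a e_g a⁻¹ = e_{π(a) g π(a)⁻¹}`,
so `ker π` is central, and `π` maps `[A(G), A(G)]` onto `[G, G]`; it remains to show that
`ker π ∩ [A(G), A(G)] = 1`. A character `φ` of the centre turns the factor set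
`(g, h) ↦ e_g e_h e_{gh}⁻¹` into a `ℂˣ`-valued 2-cocycle which is symmetric on commuting pairs,
since `e_g` and `e_h` commute when `g` and `h` do. Correcting such a cocycle by a coboundary, one
conjugacy class at a time, makes it symmetric, so by hypothesis it is a coboundary, and then `φ`
extends to a character of `A(G)`. Characters of `A(G)` kill commutators, and characters of the
abelian group `ker π` separate its points.
-/

open Subgroup

section Symmetrization

variable {G : Type*} [Group G] {α : G → G → ℂˣ}

/-- For a 2-cocycle `α`, the cocycle `α g h * β g * β h * (β (g * h))⁻¹` is symmetric exactly
when `β (k⁻¹ * v * k) = β v * conjCocycle α k v` for all `k v`. -/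
noncomputable def conjCocycle (α : G → G → ℂˣ) (k v : G) : ℂˣ :=
  α v k * (α k (k⁻¹ * v * k))⁻¹

theorem conjCocycle_mul (hα : IsTwoCocycle α) (k₁ k₂ v : G) :
    conjCocycle α (k₁ * k₂) v = conjCocycle α k₁ v * conjCocycle α k₂ (k₁⁻¹ * v * k₁) := by
  have h₁ := hα v k₁ k₂
  have h₂ := hα k₁ (k₁⁻¹ * v * k₁) k₂
  have h₃ := hα k₁ k₂ (k₂⁻¹ * (k₁⁻¹ * v * k₁) * k₂)
  rw [show k₁ * (k₁⁻¹ * v * k₁) = v * k₁ by group] at h₂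
  rw [show k₂ * (k₂⁻¹ * (k₁⁻¹ * v * k₁) * k₂) = k₁⁻¹ * v * k₁ * k₂ by group] at h₃
  rw [conjCocycle, conjCocycle, conjCocycle,
    show (k₁ * k₂)⁻¹ * v * (k₁ * k₂) = k₂⁻¹ * (k₁⁻¹ * v * k₁) * k₂ by group]
  apply_fun Additive.ofMul at h₁ h₂ h₃ ⊢
  simp only [ofMul_mul, ofMul_inv] at h₁ h₂ h₃ ⊢
  linear_combination (norm := abel) h₂ - h₁ - h₃

theorem conjCocycle_eq_one_of_commute (hsymm : ∀ g h, Commute g h → α g h = α h g) {k v : G}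
    (hkv : Commute k v) : conjCocycle α k v = 1 := by
  rw [conjCocycle, mul_assoc, hkv.symm.eq, inv_mul_cancel_left, hsymm v k hkv.symm,
    mul_inv_cancel]

theorem conjCocycle_eq_of_conj_eq (hα : IsTwoCocycle α)
    (hsymm : ∀ g h, Commute g h → α g h = α h g) {r m m' : G}
    (h : m⁻¹ * r * m = m'⁻¹ * r * m') : conjCocycle α m r = conjCocycle α m' r := by
  have hcomm : Commute (m⁻¹ * m') (m⁻¹ * r * m) := by
    change _ * _ = _ * _
    conv_lhs => rw [h]
    group
  rw [show m' = m * (m⁻¹ * m') by group, conjCocycle_mul hα,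
    conjCocycle_eq_one_of_commute hsymm hcomm, mul_one]

theorem exists_apply_conj_eq_mul_conjCocycle (hα : IsTwoCocycle α)
    (hsymm : ∀ g h, Commute g h → α g h = α h g) :
    ∃ β : G → ℂˣ, ∀ k v, β (k⁻¹ * v * k) = β v * conjCocycle α k v := by
  -- `β` is transported along conjugation from a chosen representative `r v` of each class;
  -- by `conjCocycle_eq_of_conj_eq` the choice of conjugator does not matter.
  let r : G → G := fun v => (ConjClasses.mk v).out
  have hr : ∀ k v, r (k⁻¹ * v * k) = r v := fun k v =>
    congrArg Quotient.out (ConjClasses.mk_eq_mk_iff_isConj.mpr (isConj_iff.mpr ⟨k, by group⟩))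
  have hm : ∀ v, ∃ m, m⁻¹ * r v * m = v := fun v => by
    obtain ⟨c, hc⟩ := isConj_iff.mp (ConjClasses.mk_eq_mk_iff_isConj.mp (ConjClasses.mk v).out_eq)
    exact ⟨c⁻¹, by simpa using hc⟩
  choose m hm using hm
  refine ⟨fun v => conjCocycle α (m v) (r v), fun k v => ?_⟩
  have hconj : (m (k⁻¹ * v * k))⁻¹ * r v * m (k⁻¹ * v * k) = (m v * k)⁻¹ * r v * (m v * k) :=
    calc _ = k⁻¹ * v * k := by rw [← hr k v]; exact hm _
      _ = _ := by
        conv_lhs => rw [← hm v]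
        group
  dsimp only
  rw [hr k v, conjCocycle_eq_of_conj_eq hα hsymm hconj, conjCocycle_mul hα, hm v]

theorem IsTwoCocycle.isCoboundary_of_commute
    (H : ∀ α : G → G → ℂˣ, IsTwoCocycle α → IsSymmCocycle α → IsCoboundary α)
    (hα : IsTwoCocycle α) (hsymm : ∀ g h, Commute g h → α g h = α h g) : IsCoboundary α := by
  obtain ⟨β, hβ⟩ := exists_apply_conj_eq_mul_conjCocycle hα hsymm
  set α' : G → G → ℂˣ := fun g h => α g h * β g * β h * (β (g * h))⁻¹
  have hα' : IsTwoCocycle α' := by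
    intro g h k
    have hghk := hα g h k
    apply_fun Additive.ofMul at hghk ⊢
    simp only [α', ofMul_mul, ofMul_inv, mul_assoc] at hghk ⊢
    linear_combination (norm := abel) hghk
  have hα'_symm : IsSymmCocycle α' := by
    intro g h
    have hghg := hα g h g
    have hβ' := hβ g (g * h)
    rw [conjCocycle, show g⁻¹ * (g * h) * g = h * g by group] at hβ'
    apply_fun Additive.ofMul at hghg hβ' ⊢
    simp only [α', ofMul_mul, ofMul_inv] at hghg hβ' ⊢
    linear_combination (norm := abel) hβ' + hghg
  obtain ⟨γ, hγ⟩ := H α' hα' hα'_symm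
  refine ⟨fun g => γ g * (β g)⁻¹, fun g h => ?_⟩
  have hγ' := hγ g h
  apply_fun Additive.ofMul at hγ' ⊢
  simp only [α', ofMul_mul, ofMul_inv] at hγ' ⊢
  linear_combination (norm := abel) hγ'

end Symmetrization

/-- `q ↦ exp (2πiq)` on `ℚ/ℤ`. -/
noncomputable def ratAddCircleToUnits : AddCircle (1 : ℚ) →+ Additive ℂˣ :=
  QuotientAddGroup.lift _
    ((MonoidHom.toAdditive Circle.toUnits).comp <| Circle.expHom.comp <|
      (AddMonoidHom.mulLeft (2 * Real.pi)).comp (Rat.castHom ℝ).toAddMonoidHom)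
    (by rintro _ ⟨n, rfl⟩; simp [Circle.exp_two_pi_mul_int])

theorem ratAddCircleToUnits_injective : Function.Injective ratAddCircleToUnits := by
  refine (injective_iff_map_eq_zero _).mpr fun y hy => ?_
  induction y using QuotientAddGroup.induction_on with
  | H q =>
    have hunits : Circle.toUnits (Circle.exp (2 * Real.pi * q)) = 1 := hy
    have hexp : Circle.exp (2 * Real.pi * q) = 1 :=
      Circle.ext (by simpa using congrArg Units.val hunits)
    obtain ⟨n, hn⟩ := Circle.exp_eq_one.mp hexp
    have hq : (q : ℝ) = n := by nlinarith [Real.pi_pos]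
    rw [QuotientAddGroup.eq_zero_iff, show q = n by exact_mod_cast hq]
    exact ⟨n, by simp⟩

theorem exists_monoidHom_units_apply_ne_one {N : Type*} [CommGroup N] {x : N} (hx : x ≠ 1) :
    ∃ φ : N →* ℂˣ, φ x ≠ 1 := by
  obtain ⟨c, hc⟩ := CharacterModule.exists_character_apply_ne_zero_of_ne_zero
    (a := Additive.ofMul x) hx
  exact ⟨MonoidHom.toAdditive.symm (ratAddCircleToUnits.comp c),
    fun h => hc ((injective_iff_map_eq_zero _).mp ratAddCircleToUnits_injective _ h)⟩

section CentralExtension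

variable {E G : Type*} [Group E] [Group G] {π : E →* G} {s : G → E}

def factorSet (s : G → E) (g h : G) : E := s g * s h * (s (g * h))⁻¹

theorem factorSet_mem_center (hs : ∀ g, π (s g) = g) (hker : π.ker ≤ center E) (g h : G) :
    factorSet s g h ∈ center E :=
  hker (by simp [factorSet, hs])

theorem mul_inv_section_mem_center (hs : ∀ g, π (s g) = g) (hker : π.ker ≤ center E) (a : E) :
    a * (s (π a))⁻¹ ∈ center E :=
  hker (by simp [hs])

theorem factorSet_mul_factorSet (hs : ∀ g, π (s g) = g) (hker : π.ker ≤ center E) (g h k : G) :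
    factorSet s g h * factorSet s (g * h) k = factorSet s g (h * k) * factorSet s h k := by
  have hc := mem_center_iff.mp (factorSet_mem_center hs hker h k)
  calc factorSet s g h * factorSet s (g * h) k
      = s g * (factorSet s h k * s (h * k)) * (s (g * (h * k)))⁻¹ := by
        simp only [factorSet]; group
    _ = s g * s (h * k) * ((s (g * (h * k)))⁻¹ * factorSet s h k) := by
        rw [← hc, hc (s (g * (h * k)))⁻¹]; group
    _ = _ := by simp only [factorSet, mul_assoc]

theorem factorSet_comm {g h : G} (hgh : Commute g h) (hs : Commute (s g) (s h)) :
    factorSet s g h = factorSet s h g := by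
  rw [factorSet, factorSet, hs.eq, hgh.eq]

theorem mul_mul_inv_section (hs : ∀ g, π (s g) = g) (hker : π.ker ≤ center E) (a b : E) :
    a * b * (s (π (a * b)))⁻¹ =
      a * (s (π a))⁻¹ * (b * (s (π b))⁻¹) * factorSet s (π a) (π b) := by
  have hc := mem_center_iff.mp (mul_inv_section_mem_center hs hker b) (s (π a))⁻¹
  rw [factorSet, map_mul, mul_assoc a (s (π a))⁻¹, hc]
  group

theorem exists_monoidHom_extend_of_isCoboundary (hs : ∀ g, π (s g) = g)
    (hker : π.ker ≤ center E) (φ : center E →* ℂˣ)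
    (hφ : IsCoboundary fun g h => φ ⟨factorSet s g h, factorSet_mem_center hs hker g h⟩) :
    ∃ f : E →* ℂˣ, ∀ n (hn : n ∈ π.ker), f n = φ ⟨n, hker hn⟩ := by
  obtain ⟨b, hb⟩ : ∃ b : G → ℂˣ, ∀ g h, φ ⟨factorSet s g h, factorSet_mem_center hs hker g h⟩ =
      b g * b h * (b (g * h))⁻¹ := hφ
  let ψ : E → ℂˣ := fun a => φ ⟨a * (s (π a))⁻¹, mul_inv_section_mem_center hs hker a⟩ * b (π a)
  have hψ : ∀ a a', ψ (a * a') = ψ a * ψ a' := fun a a' => by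
    have hsplit :
        (⟨a * a' * (s (π (a * a')))⁻¹, mul_inv_section_mem_center hs hker _⟩ : center E) =
        ⟨_, mul_inv_section_mem_center hs hker a⟩ * ⟨_, mul_inv_section_mem_center hs hker a'⟩ *
          ⟨_, factorSet_mem_center hs hker (π a) (π a')⟩ :=
      Subtype.ext (mul_mul_inv_section hs hker a a')
    simp only [ψ]
    rw [hsplit, map_mul φ, map_mul φ, hb, ← map_mul π]
    apply_fun Additive.ofMul
    simp only [ofMul_mul, ofMul_inv]
    abel
  refine ⟨MonoidHom.mk' ψ hψ, fun n hn => ?_⟩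
  have hsplit : (⟨n * (s (π n))⁻¹, mul_inv_section_mem_center hs hker n⟩ : center E) =
      ⟨n, hker hn⟩ * (⟨_, factorSet_mem_center hs hker 1 1⟩)⁻¹ := by
    apply Subtype.ext
    simp [factorSet, MonoidHom.mem_ker.mp hn]
  simp only [MonoidHom.mk'_apply, ψ]
  rw [hsplit, map_mul, map_inv, hb, MonoidHom.mem_ker.mp hn, one_mul]
  group

open scoped IsMulCommutative in
theorem eq_one_of_mem_ker_of_mem_commutator
    (H : ∀ α : G → G → ℂˣ, IsTwoCocycle α → IsSymmCocycle α → IsCoboundary α)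
    (hs : ∀ g, π (s g) = g) (hker : π.ker ≤ center E)
    (hcomm : ∀ g h, Commute g h → Commute (s g) (s h)) {x : E} (hx : x ∈ π.ker)
    (hxc : x ∈ commutator E) : x = 1 := by
  by_contra hx1
  obtain ⟨φ, hφ⟩ := exists_monoidHom_units_apply_ne_one (x := (⟨x, hker hx⟩ : center E))
    (by simpa [Subtype.ext_iff] using hx1)
  let α : G → G → ℂˣ := fun g h => φ ⟨factorSet s g h, factorSet_mem_center hs hker g h⟩
  have hα : IsTwoCocycle α := fun g h k => by
    simp only [α, ← map_mul]
    exact congrArg φ (Subtype.ext (factorSet_mul_factorSet hs hker g h k))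
  have hα_symm : ∀ g h, Commute g h → α g h = α h g := fun g h hgh => by
    simp only [α, factorSet_comm hgh (hcomm g h hgh)]
  obtain ⟨f, hf⟩ := exists_monoidHom_extend_of_isCoboundary hs hker φ
    (hα.isCoboundary_of_commute H hα_symm)
  exact hφ (by rw [← hf x hx]; exact Abelianization.commutator_subset_ker f hxc)

end CentralExtension

theorem nonempty_commutator_mulEquiv_of_surjective {E G : Type*} [Group E] [Group G]
    (π : E →* G) (hπ : Function.Surjective π)
    (hker : ∀ x ∈ π.ker, x ∈ commutator E → x = 1) :
    Nonempty (commutator E ≃* commutator G) := by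
  have hmap : (commutator E).map π = commutator G := by
    rw [map_commutator_eq, MonoidHom.range_eq_top.mpr hπ, commutator_def]
  have hinj : Function.Injective (π.subgroupMap (commutator E)) :=
    (injective_iff_map_eq_one _).mpr fun x hx =>
      Subtype.ext (hker x (congrArg Subtype.val hx) x.2)
  exact ⟨(MulEquiv.ofBijective _ ⟨hinj, π.subgroupMap_surjective _⟩).trans
    (MulEquiv.subgroupCongr hmap)⟩

namespace EnvelopingGroup

variable {G : Type*} [Group G]

def of (g : G) : EnvelopingGroup G := PresentedGroup.of g

def proj : EnvelopingGroup G →* G :=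
  PresentedGroup.toGroup (f := id) (by rintro _ ⟨g, h, rfl⟩; simp)

@[simp]
theorem proj_of (g : G) : proj (of g) = g := PresentedGroup.toGroup.of _

theorem closure_range_of : closure (Set.range (of : G → EnvelopingGroup G)) = ⊤ :=
  PresentedGroup.closure_range_of _

theorem of_mul_of_mul_inv (g h : G) : of g * of h * (of g)⁻¹ = of (g * h * g⁻¹) :=
  mul_inv_eq_one.mp (PresentedGroup.one_of_mem ⟨g, h, rfl⟩)

theorem conj_of (a : EnvelopingGroup G) :
    ∀ g, a * of g * a⁻¹ = of (proj a * g * (proj a)⁻¹) := by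
  induction (closure_range_of (G := G) ▸ mem_top a : a ∈ closure (Set.range of))
    using closure_induction with
  | mem _ hx =>
    obtain ⟨h, rfl⟩ := hx
    simpa using of_mul_of_mul_inv h
  | one => simp
  | mul x y _ _ ihx ihy =>
    intro g
    rw [show x * y * of g * (x * y)⁻¹ = x * (y * of g * y⁻¹) * x⁻¹ by group, ihy, ihx, map_mul]
    group
  | inv x _ ihx =>
    intro g
    have h := ihx ((proj x)⁻¹ * g * proj x)
    rw [show proj x * ((proj x)⁻¹ * g * proj x) * (proj x)⁻¹ = g by group] at h
    rw [← h, map_inv]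
    group

theorem ker_proj_le_center :
    (proj : EnvelopingGroup G →* G).ker ≤ center (EnvelopingGroup G) := by
  intro n hn
  have hgen : closure (Set.range of) ≤ centralizer {n} := by
    rw [closure_le]
    rintro _ ⟨g, rfl⟩
    have h := conj_of n g
    rw [MonoidHom.mem_ker.mp hn, one_mul, inv_one, mul_one, mul_inv_eq_iff_eq_mul] at h
    exact mem_centralizer_singleton_iff.mpr h.symm
  rw [closure_range_of] at hgen
  exact mem_center_iff.mpr fun a => mem_centralizer_singleton_iff.mp (hgen (mem_top a))

theorem commute_of {g h : G} (hgh : Commute g h) : Commute (of g) (of h) := by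
  have h := of_mul_of_mul_inv g h
  rwa [hgh.eq, mul_inv_cancel_right, mul_inv_eq_iff_eq_mul] at h

end EnvelopingGroup

theorem commutator_env_iso_of_symm_cocycles_coboundaries_general
    (G : Type*) [Group G]
    (h : ∀ α : G → G → ℂˣ, IsTwoCocycle α → IsSymmCocycle α → IsCoboundary α) :
    Nonempty (↥(commutator (EnvelopingGroup G)) ≃* ↥(commutator G)) :=
  nonempty_commutator_mulEquiv_of_surjective EnvelopingGroup.proj
    (fun g => ⟨EnvelopingGroup.of g, EnvelopingGroup.proj_of g⟩)
    fun _ hx hxc => eq_one_of_mem_ker_of_mem_commutator h EnvelopingGroup.proj_of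
      EnvelopingGroup.ker_proj_le_center (fun _ _ => EnvelopingGroup.commute_of) hx hxc

/-- If every symmetric 2-cocycle on a finite group `G` is a coboundary, then the
commutator subgroup of `A(G)` is isomorphic to the commutator subgroup of `G`. -/
theorem commutator_env_iso_of_symm_cocycles_coboundaries
    (G : Type*) [Group G] [Fintype G]
    (h : ∀ α : G → G → ℂˣ, IsTwoCocycle α → IsSymmCocycle α → IsCoboundary α) :
    Nonempty (↥(commutator (EnvelopingGroup G)) ≃* ↥(commutator G)) :=
  commutator_env_iso_of_symm_cocycles_coboundaries_general G h
end

section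
/- Let G be a finite abelian group. Then every symmetric 2-cocycle on G with values in ℂˣ is a coboundary. -/
namespace SymmCocycleAux

/-- `ℂˣ` is rootable by naturals since `ℂ` is algebraically closed. -/
noncomputable def rootableUnits : RootableBy ℂˣ ℕ :=
  rootableByOfPowLeftSurj _ _ (fun {n} hn z => by
    obtain ⟨w, hw⟩ := IsAlgClosed.exists_pow_nat_eq (z : ℂ) (Nat.pos_of_ne_zero hn)
    have hw0 : w ≠ 0 := by
      intro h
      rw [h, zero_pow hn] at hw
      exact z.ne_zero hw.symm
    exact ⟨Units.mk0 w hw0, Units.ext (by simpa using hw)⟩)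

noncomputable def rootableUnitsInt : RootableBy ℂˣ ℤ :=
  letI := rootableUnits
  Group.rootableByIntOfRootableByNat ℂˣ

/-- `Additive ℂˣ` is a divisible group. -/
noncomputable def divisibleAddUnits : DivisibleBy (Additive ℂˣ) ℤ :=
  letI := rootableUnitsInt
  { div := fun a n => Additive.ofMul (RootableBy.root a.toMul n)
    div_zero := fun a => congrArg Additive.ofMul (RootableBy.root_zero a.toMul)
    div_cancel := fun {n} a hn => by
      show Additive.ofMul (RootableBy.root a.toMul n ^ n) = a
      rw [RootableBy.root_cancel _ hn]
      rfl }

variable {G : Type*} [CommGroup G]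

/-- The extension `1 → ℂˣ → E → G → 1` determined by a 2-cocycle `α`. -/
structure Ext (α : G → G → ℂˣ) : Type _ where
  a : ℂˣ
  g : G

variable (α : G → G → ℂˣ)

/-- The twisted group structure on the extension. -/
noncomputable def extCommGroup (hc : IsTwoCocycle α) (hs : IsSymmCocycle α)
    (h1 : ∀ g, α 1 g = 1) (hg1 : ∀ g, α g 1 = 1) : CommGroup (Ext α) where
  mul x y := ⟨x.a * y.a * α x.g y.g, x.g * y.g⟩
  one := ⟨1, 1⟩
  inv x := ⟨(x.a * α x.g x.g⁻¹)⁻¹, x.g⁻¹⟩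
  mul_assoc x y z := by
    obtain ⟨a, g⟩ := x; obtain ⟨b, h⟩ := y; obtain ⟨d, k⟩ := z
    show (⟨(a * b * α g h) * d * α (g * h) k, (g * h) * k⟩ : Ext α) =
      ⟨a * (b * d * α h k) * α g (h * k), g * (h * k)⟩
    refine congrArg₂ Ext.mk ?_ (mul_assoc _ _ _)
    have hcc := congrArg Units.val (hc g h k)
    apply Units.ext
    push_cast at hcc ⊢
    linear_combination (a : ℂ) * b * d * hcc
  one_mul x := by
    obtain ⟨a, g⟩ := x
    show (⟨1 * a * α 1 g, 1 * g⟩ : Ext α) = ⟨a, g⟩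
    rw [h1 g, one_mul, mul_one, one_mul]
  mul_one x := by
    obtain ⟨a, g⟩ := x
    show (⟨a * 1 * α g 1, g * 1⟩ : Ext α) = ⟨a, g⟩
    rw [hg1 g, mul_one, mul_one, mul_one]
  inv_mul_cancel x := by
    obtain ⟨a, g⟩ := x
    show (⟨(a * α g g⁻¹)⁻¹ * a * α g⁻¹ g, g⁻¹ * g⟩ : Ext α) = ⟨1, 1⟩
    refine congrArg₂ Ext.mk ?_ (inv_mul_cancel g)
    rw [hs g⁻¹ g]
    group
  mul_comm x y := by
    obtain ⟨a, g⟩ := x; obtain ⟨b, h⟩ := y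
    show (⟨a * b * α g h, g * h⟩ : Ext α) = ⟨b * a * α h g, h * g⟩
    rw [hs g h, mul_comm a b, mul_comm g h]

end SymmCocycleAux

/-- Every symmetric 2-cocycle on a finite abelian group with values in `ℂˣ` is a
coboundary. -/
theorem symm_cocycle_isCoboundary_of_comm
    (G : Type*) [CommGroup G] [Fintype G]
    (α : G → G → ℂˣ) (hc : IsTwoCocycle α) (hs : IsSymmCocycle α) :
    IsCoboundary α := by
  classical
  -- Step 1: normalize the cocycle so that `α' 1 g = α' g 1 = 1`.
  set c : ℂˣ := α 1 1 with hcdef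
  have hone : ∀ g : G, α 1 g = c := by
    intro g
    have h := hc 1 1 g
    simp only [one_mul] at h
    exact (mul_right_cancel h).symm
  set α' : G → G → ℂˣ := fun g h => α g h * c⁻¹ with hα'
  have hc' : IsTwoCocycle α' := by
    intro g h k
    have := hc g h k
    simp only [hα']
    rw [mul_mul_mul_comm (α g h) c⁻¹, mul_mul_mul_comm (α g (h * k)) c⁻¹, this]
  have hs' : IsSymmCocycle α' := fun g h => by simp only [hα', hs g h]
  have h1' : ∀ g, α' 1 g = 1 := fun g => by
    simp only [hα', hone g, mul_inv_cancel]
  have hg1' : ∀ g, α' g 1 = 1 := fun g => by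
    simp only [hα', hs g 1, hone g, mul_inv_cancel]
  suffices hcb : IsCoboundary α' by
    obtain ⟨β, hβ⟩ := hcb
    refine ⟨fun g => β g * c, fun g h => ?_⟩
    have e : (β g * c) * (β h * c) * (β (g * h) * c)⁻¹ =
        (β g * β h * (β (g * h))⁻¹) * c := by
      simp [mul_inv, mul_comm, mul_left_comm, mul_assoc]
    rw [e, ← hβ g h]
    simp only [hα']
    exact (inv_mul_cancel_right _ _).symm
  -- Step 2: build the extension group and split it using divisibility of `ℂˣ`.
  letI : CommGroup (SymmCocycleAux.Ext α') :=
    SymmCocycleAux.extCommGroup α' hc' hs' h1' hg1'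
  letI : DivisibleBy (Additive ℂˣ) ℤ := SymmCocycleAux.divisibleAddUnits
  have hbaer : Module.Baer ℤ (Additive ℂˣ) := Module.Baer.of_divisible _
  -- the embedding `ℂˣ → E`
  let f : Additive ℂˣ →+ Additive (SymmCocycleAux.Ext α') :=
    { toFun := fun a => Additive.ofMul (⟨a.toMul, 1⟩ : SymmCocycleAux.Ext α')
      map_zero' := rfl
      map_add' := fun a b => by
        show Additive.ofMul (⟨(a.toMul * b.toMul : ℂˣ), 1⟩ : SymmCocycleAux.Ext α') =
          Additive.ofMul ((⟨a.toMul, 1⟩ : SymmCocycleAux.Ext α') * ⟨b.toMul, 1⟩)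
        congr 1
        show (⟨(a.toMul * b.toMul : ℂˣ), 1⟩ : SymmCocycleAux.Ext α') =
          ⟨a.toMul * b.toMul * α' 1 1, 1 * 1⟩
        rw [h1' 1, mul_one, mul_one] }
  have hf : Function.Injective f := by
    intro a b hab
    have h1 : (⟨a.toMul, 1⟩ : SymmCocycleAux.Ext α') = ⟨b.toMul, 1⟩ := hab
    have h2 := congrArg SymmCocycleAux.Ext.a h1
    exact Additive.toMul.injective h2
  obtain ⟨t, ht⟩ := hbaer.extension_property_addMonoidHom f hf (AddMonoidHom.id _)
  have htf : ∀ a : ℂˣ,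
      t (Additive.ofMul (⟨a, 1⟩ : SymmCocycleAux.Ext α')) = Additive.ofMul a :=
    fun a => congrFun (congrArg DFunLike.coe ht) (Additive.ofMul a)
  -- Step 3: the coboundary
  refine ⟨fun g => (t (Additive.ofMul (⟨1, g⟩ : SymmCocycleAux.Ext α'))).toMul,
    fun g h => ?_⟩
  have hmul : (⟨1, g⟩ : SymmCocycleAux.Ext α') * ⟨1, h⟩ =
      (⟨α' g h, 1⟩ : SymmCocycleAux.Ext α') * ⟨1, g * h⟩ := by
    show (⟨(1 : ℂˣ) * 1 * α' g h, g * h⟩ : SymmCocycleAux.Ext α') =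
      ⟨α' g h * 1 * α' 1 (g * h), 1 * (g * h)⟩
    rw [h1' (g * h), one_mul, one_mul, mul_one, mul_one, one_mul]
  have key : t (Additive.ofMul (⟨1, g⟩ : SymmCocycleAux.Ext α')) +
      t (Additive.ofMul (⟨1, h⟩ : SymmCocycleAux.Ext α')) =
      Additive.ofMul (α' g h) +
      t (Additive.ofMul (⟨1, g * h⟩ : SymmCocycleAux.Ext α')) := by
    have h2 := congrArg t (congrArg Additive.ofMul hmul)
    simpa only [ofMul_mul, map_add, htf] using h2
  have key' := congrArg Additive.toMul key
  simp only [toMul_add, toMul_ofMul] at key'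
  rw [eq_comm, mul_inv_eq_iff_eq_mul]
  exact key'
end
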